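/- Let k ≥ 2 and suppose nonnegative integers n ≥ m ≥ l ≥ 0, d ≥ 2, 1 ≤ a ≤ 9 satisfy L_n^{(k)} · L_m^{(k)} · L_l^{(k)} = a·(10^d − 1)/9, and assume n > 25. Then (a/9)·10^d ≠ f_k(α) · (2α − 1) · α^{n−1} · L_m^{(k)} · L_l^{(k)}, where α is the dominant root of x^k − x^{k−1} − ⋯ − x − 1. (Equivalently, the linear form Λ_3 = α^{−(n−1)}·10^d·f_k(α)^{−1}(2α−1)^{−1}·(L_m^{(k)})^{−1}(L_l^{(k)})^{−1}·(a/9) − 1 is nonzero.) -/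

import Mathlib

/-!
Suppose equality holds. Clearing denominators, `α` satisfies
`N * ((k + 1) * α - 2 * k) = M * α ^ (n - 1) * (α - 1) * (2 * α - 1)` with `N = a * 10 ^ d`
and `M = 9 * L_m * L_l`. As a root of `x ^ (k + 1) - 2 * x ^ k + 1`, `α` is an algebraic unit,
and every complex conjugate `z` of `α` satisfies the same relation. Take the product over all
`D` conjugates. On the left, `∏ ((k + 1) * z - 2 * k)` is, up to sign, a nonzero integer
(because `α ≠ 2k/(k+1)`), so the left side has absolute value at least `N ^ D`. On the right,
`∏ |z| = 1` and `|z| ≤ 9/4`, so the right side is at most `(143/8 * M) ^ D`. Hence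
`N ≤ 143/8 * M`, whereas the repdigit equation gives `N ≥ L_n * M ≥ 27 * M`.
-/

open Polynomial

/-- The `k`-generalized Lucas sequence: `L 0 = 2`, `L 1 = 1`, and for `n ≥ 2`,
`L n = L (n-1) + L (n-2) + ⋯ + L (n-k)`, where terms with negative index count as `0`. -/
def lucasK (k : ℕ) : ℕ → ℕ
  | 0 => 2
  | 1 => 1
  | n + 2 => ∑ j ∈ Finset.range k, if _ : j ≤ n + 1 then lucasK k (n + 1 - j) else 0
termination_by n => n
decreasing_by omega

theorem lucasK_pos {k : ℕ} (hk : 1 ≤ k) (n : ℕ) : 0 < lucasK k n := by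
  induction n using Nat.strong_induction_on with
  | _ n ih =>
    match n with
    | 0 => simp [lucasK]
    | 1 => simp [lucasK]
    | n + 2 =>
      rw [lucasK]
      refine Finset.sum_pos' (fun _ _ => Nat.zero_le _) ⟨0, Finset.mem_range.mpr hk, ?_⟩
      simpa using ih (n + 1) (by omega)

theorem lucasK_add_le {k : ℕ} (hk : 2 ≤ k) (n : ℕ) :
    lucasK k (n + 1) + lucasK k n ≤ lucasK k (n + 2) := by
  rw [lucasK]
  calc lucasK k (n + 1) + lucasK k n
      = ∑ j ∈ Finset.range 2, if _ : j ≤ n + 1 then lucasK k (n + 1 - j) else 0 := by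
        simp [Finset.sum_range_succ]
    _ ≤ _ := Finset.sum_le_sum_of_subset (Finset.range_subset_range.mpr hk)

theorem add_three_le_lucasK {k : ℕ} (hk : 2 ≤ k) (n : ℕ) : n + 3 ≤ lucasK k (n + 2) := by
  induction n with
  | zero => simpa [lucasK] using lucasK_add_le hk 0
  | succ n ih => linarith [lucasK_add_le hk (n + 1), lucasK_pos (by omega : 1 ≤ k) (n + 1)]

theorem mul_ten_pow_eq_nine_mul_repdigit_add (a d : ℕ) :
    a * 10 ^ d = 9 * (a * ((10 ^ d - 1) / 9)) + a := by
  have h9 := Nat.mul_div_cancel' (Nat.sub_one_dvd_pow_sub_one 10 d)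
  have h1 : 1 ≤ 10 ^ d := Nat.one_le_pow _ _ (by norm_num)
  calc a * 10 ^ d = a * (10 ^ d - 1) + a := by
        rw [Nat.mul_sub, mul_one, Nat.sub_add_cancel (Nat.le_mul_of_pos_right a h1)]
    _ = 9 * (a * ((10 ^ d - 1) / 9)) + a := by rw [mul_left_comm, h9]

theorem two_mul_lt_succ_mul {k : ℕ} {α : ℝ} (h : 2 * (1 - (2 : ℝ) ^ (-(k : ℤ))) < α) :
    2 * (k : ℝ) < (k + 1) * α := by
  have hk : (k : ℝ) + 1 ≤ 2 ^ k := by exact_mod_cast Nat.lt_two_pow_self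
  have hinv : (k + 1 : ℝ) * (2 : ℝ) ^ (-(k : ℤ)) ≤ 1 := by
    rw [zpow_neg, zpow_natCast, ← div_eq_mul_inv, div_le_one (by positivity)]
    exact hk
  nlinarith

theorem norm_le_of_pow_succ_sub_two_mul_pow_add_one_eq_zero {k : ℕ} (hk : 2 ≤ k) {z : ℂ}
    (hz : z ^ (k + 1) - 2 * z ^ k + 1 = 0) : ‖z‖ ≤ 9 / 4 := by
  by_contra! hgt
  have hnorm : ‖z‖ ^ k * ‖z‖ ≤ 2 * ‖z‖ ^ k + 1 := by
    calc ‖z‖ ^ k * ‖z‖ = ‖2 * z ^ k - 1‖ := by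
          rw [← norm_pow, ← norm_mul, ← pow_succ]; congr 1; linear_combination hz
      _ ≤ ‖2 * z ^ k‖ + ‖(1 : ℂ)‖ := norm_sub_le _ _
      _ = 2 * ‖z‖ ^ k + 1 := by simp
  have hpow : (9 / 4 : ℝ) ^ 2 ≤ ‖z‖ ^ k :=
    (pow_le_pow_right₀ (by norm_num) hk).trans (pow_le_pow_left₀ (by norm_num) hgt.le k)
  nlinarith

theorem aeval_ratCast_minpoly_int_ne_zero {K L : Type*} [Field K] [CharZero K] [Field L]
    [CharZero L] {α : K} (hα : IsIntegral ℤ α) {q : ℚ} (hq : (q : K) ≠ α) :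
    aeval (q : L) (minpoly ℤ α) ≠ 0 := by
  intro h
  have hℚ : aeval q (minpoly ℤ α) = 0 := by
    rw [← eq_ratCast (algebraMap ℚ L), aeval_algebraMap_apply] at h
    exact (map_eq_zero_iff _ (algebraMap ℚ L).injective).mp h
  have hK : aeval (algebraMap ℚ K q) (minpoly ℚ α) = 0 := by
    rw [minpoly.isIntegrallyClosed_eq_field_fractions' ℚ hα, aeval_map_algebraMap,
      aeval_algebraMap_apply, hℚ, map_zero]
  have hmin : minpoly ℚ α = X - C q := by
    rw [minpoly.eq_of_irreducible_of_monic (minpoly.irreducible hα.tower_top) hK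
      (minpoly.monic hα.tower_top), minpoly.eq_X_sub_C]
  have := minpoly.aeval ℚ α
  rw [hmin, map_sub, aeval_X, aeval_C, sub_eq_zero, eq_ratCast] at this
  exact hq this.symm

section IntPolynomial

variable {P : ℤ[X]}

theorem card_aroots_complex : (P.aroots ℂ).card = P.natDegree :=
  IsAlgClosed.card_aroots_eq_natDegree

theorem norm_aeval_eq_prod_aroots_complex (hP : P.Monic) (w : ℂ) :
    ‖aeval w P‖ = ((P.aroots ℂ).map (‖w - ·‖)).prod := by
  rw [(IsAlgClosed.splits _).aeval_eq_prod_aroots_of_monic hP]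
  exact (map_multiset_prod (normHom (α := ℂ)) _).trans (by rw [Multiset.map_map]; rfl)

theorem prod_norm_aroots_complex (hP : P.Monic) :
    ((P.aroots ℂ).map (‖·‖)).prod = |(P.coeff 0 : ℝ)| := by
  have h := norm_aeval_eq_prod_aroots_complex hP 0
  rw [← coeff_zero_eq_aeval_zero'] at h
  simpa using h.symm

theorem one_le_prod_norm_aroots_mul_sub (hP : P.Monic) {s p : ℤ} (hs : s ≠ 0)
    (hc : aeval ((p : ℂ) / s) P ≠ 0) :
    1 ≤ ((P.aroots ℂ).map fun z => ‖(s : ℂ) * z - p‖).prod := by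
  have hsC : (s : ℂ) ≠ 0 := Int.cast_ne_zero.mpr hs
  have hscale :
      (((P.scaleRoots s).eval p : ℤ) : ℂ) = (s : ℂ) ^ P.natDegree * aeval ((p : ℂ) / s) P := by
    have := scaleRoots_eval₂_mul (p := P) (Int.castRingHom ℂ) ((p : ℂ) / s) s
    rw [eq_intCast, mul_div_cancel₀ _ hsC, eval₂_at_intCast, Int.cast_id] at this
    rw [aeval_def, algebraMap_int_eq, ← this, eq_intCast]
  have hne : (P.scaleRoots s).eval p ≠ 0 := by
    rw [← Int.cast_ne_zero (α := ℂ), hscale]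
    exact mul_ne_zero (pow_ne_zero _ hsC) hc
  have hterm : ∀ z : ℂ, ‖(s : ℂ) * z - p‖ = ‖(s : ℂ)‖ * ‖(p : ℂ) / s - z‖ := fun z => by
    rw [← norm_mul, mul_sub, mul_div_cancel₀ _ hsC, norm_sub_rev]
  calc (1 : ℝ) ≤ |(((P.scaleRoots s).eval p : ℤ) : ℝ)| := by exact_mod_cast Int.one_le_abs hne
    _ = ‖(s : ℂ)‖ ^ P.natDegree * ‖aeval ((p : ℂ) / s) P‖ := by
      rw [← norm_pow, ← norm_mul, ← hscale, Complex.norm_intCast]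
    _ = _ := by
      rw [norm_aeval_eq_prod_aroots_complex hP, funext hterm, Multiset.prod_map_mul,
        Multiset.map_const', Multiset.prod_replicate, card_aroots_complex]

theorem aeval_eq_zero_of_mem_aroots {Q : ℤ[X]} (hPQ : P ∣ Q) {z : ℂ} (hz : z ∈ P.aroots ℂ) :
    aeval z Q = 0 := by
  obtain ⟨R, rfl⟩ := hPQ
  rw [map_mul, (mem_aroots'.mp hz).2, zero_mul]

theorem le_mul_of_forall_mem_aroots (hP : P.Monic) (hdeg : 0 < P.natDegree)
    (hP0 : IsUnit (P.coeff 0)) {s p : ℤ} (hs : s ≠ 0) (hc : aeval ((p : ℂ) / s) P ≠ 0)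
    {N M e : ℕ} {g : ℂ → ℂ} {B : ℝ}
    (hrel : ∀ z ∈ P.aroots ℂ, N * (s * z - p) = M * (z ^ e * g z))
    (hg : ∀ z ∈ P.aroots ℂ, ‖g z‖ ≤ B) : (N : ℝ) ≤ M * B := by
  set R := P.aroots ℂ
  have hcard : R.card = P.natDegree := card_aroots_complex
  have hB : 0 ≤ B := by
    obtain ⟨z, hz⟩ := Multiset.card_pos_iff_exists_mem.mp (hcard ▸ hdeg)
    exact (norm_nonneg _).trans (hg z hz)
  have hnorm : R.map (fun z => (N : ℝ) * ‖(s : ℂ) * z - p‖) =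
      R.map (fun z => (M : ℝ) * (‖z‖ ^ e * ‖g z‖)) :=
    Multiset.map_congr rfl fun z hz => by simpa using congrArg norm (hrel z hz)
  have hlower : (N : ℝ) ^ P.natDegree ≤ (R.map fun z => (N : ℝ) * ‖(s : ℂ) * z - p‖).prod := by
    rw [Multiset.prod_map_mul, Multiset.map_const', Multiset.prod_replicate, hcard]
    exact le_mul_of_one_le_right (by positivity) (one_le_prod_norm_aroots_mul_sub hP hs hc)
  have hupper : (R.map fun z => (M : ℝ) * (‖z‖ ^ e * ‖g z‖)).prod ≤ (M * B) ^ P.natDegree := by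
    rw [Multiset.prod_map_mul, Multiset.map_const', Multiset.prod_replicate, hcard,
      Multiset.prod_map_mul, Multiset.prod_map_pow, prod_norm_aroots_complex hP,
      ← Int.cast_abs, Int.isUnit_iff_abs_eq.mp hP0, Int.cast_one, one_pow, one_mul, mul_pow]
    gcongr
    calc (R.map fun z => ‖g z‖).prod ≤ (R.map fun _ => B).prod :=
          Multiset.prod_map_le_prod_map₀ _ _ (fun _ _ => norm_nonneg _) hg
      _ = B ^ P.natDegree := by rw [Multiset.map_const', Multiset.prod_replicate, hcard]
  exact (pow_le_pow_iff_left₀ (by positivity) (by positivity) hdeg.ne').mp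
    (hlower.trans (hnorm ▸ hupper))

end IntPolynomial

theorem le_mul_of_root_relation {α : ℝ} {k e N M : ℕ} (hk : 2 ≤ k)
    (hα : α ^ (k + 1) - 2 * α ^ k + 1 = 0) (hαk : 2 * (k : ℝ) < (k + 1) * α)
    (hrel : N * ((k + 1) * α - 2 * k) = M * (α ^ e * ((α - 1) * (2 * α - 1)))) :
    (N : ℝ) ≤ M * (143 / 8) := by
  set Qk : ℤ[X] := X ^ (k + 1) - 2 * X ^ k + 1
  set Qrel : ℤ[X] := (N : ℤ[X]) * (((k : ℤ[X]) + 1) * X - 2 * (k : ℤ[X])) -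
    (M : ℤ[X]) * (X ^ e * ((X - 1) * (2 * X - 1)))
  have aeval_Qk {A : Type} [CommRing A] (x : A) :
      aeval x Qk = x ^ (k + 1) - 2 * x ^ k + 1 := by
    simp only [Qk, map_add, map_sub, map_mul, map_pow, aeval_X, map_ofNat, map_one]
  have aeval_Qrel {A : Type} [CommRing A] (x : A) :
      aeval x Qrel = N * ((k + 1) * x - 2 * k) - M * (x ^ e * ((x - 1) * (2 * x - 1))) := by
    simp only [Qrel, map_add, map_sub, map_mul, map_pow, aeval_X, map_ofNat, map_one,
      map_natCast]
  have hint : IsIntegral ℤ α :=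
    ⟨Qk, by simp only [Qk]; monicity!, by rw [← aeval_def, aeval_Qk, hα]⟩
  have hconj : ∀ Q : ℤ[X], aeval α Q = 0 → ∀ z ∈ (minpoly ℤ α).aroots ℂ, aeval z Q = 0 :=
    fun Q hQ z hz => aeval_eq_zero_of_mem_aroots (minpoly.isIntegrallyClosed_dvd hint hQ) hz
  have hP0 : IsUnit ((minpoly ℤ α).coeff 0) := by
    have hQk0 : constantCoeff Qk = 1 := by simp [Qk]; omega
    refine isUnit_of_dvd_one (hQk0 ▸ map_dvd constantCoeff ?_)
    exact minpoly.isIntegrallyClosed_dvd hint (by rw [aeval_Qk, hα])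
  have hc : aeval (((2 * k : ℤ) : ℂ) / ((k + 1 : ℤ) : ℂ)) (minpoly ℤ α) ≠ 0 := by
    have := aeval_ratCast_minpoly_int_ne_zero (L := ℂ) hint (q := 2 * k / (k + 1))
      (by push_cast; exact ((div_lt_iff₀ (by positivity)).mpr (by linarith)).ne)
    push_cast at this ⊢
    exact this
  refine le_mul_of_forall_mem_aroots (minpoly.monic hint) (minpoly.natDegree_pos hint) hP0
    (s := k + 1) (p := 2 * k) (by positivity) hc (e := e) (B := 143 / 8)
    (g := fun z => (z - 1) * (2 * z - 1)) (fun z hz => ?_) (fun z hz => ?_)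
  · have := hconj Qrel (by rw [aeval_Qrel, hrel, sub_self]) z hz
    rw [aeval_Qrel, sub_eq_zero] at this
    push_cast
    exact this
  · have hz' := norm_le_of_pow_succ_sub_two_mul_pow_add_one_eq_zero hk
      (by rw [← aeval_Qk]; exact hconj Qk (by rw [aeval_Qk, hα]) z hz)
    calc ‖(z - 1) * (2 * z - 1)‖ ≤ (‖z‖ + 1) * (2 * ‖z‖ + 1) := by
          rw [norm_mul]
          gcongr
          · exact (norm_sub_le _ _).trans (by simp)
          · exact (norm_sub_le _ _).trans (by simp)
      _ ≤ 143 / 8 := by nlinarith [norm_nonneg z]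

theorem Lambda3_nonzero_general
    (k n m l d a : ℕ) (hk : 2 ≤ k)
    (heq : lucasK k n * lucasK k m * lucasK k l = a * ((10 ^ d - 1) / 9))
    (hn : 25 < n)
    (α : ℝ) (hroot : α ^ k = ∑ i ∈ Finset.range k, α ^ i)
    (hα₁ : 2 * (1 - (2 : ℝ) ^ (-(k : ℤ))) < α) :
    ((a : ℝ) / 9) * 10 ^ d ≠
      ((α - 1) / (2 + ((k : ℝ) + 1) * (α - 2))) * (2 * α - 1) *
        α ^ ((n : ℤ) - 1) * (lucasK k m : ℝ) * (lucasK k l : ℝ) := by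
  intro h
  have hLn : 27 ≤ lucasK k n := by
    obtain ⟨j, rfl⟩ : ∃ j, n = j + 2 := ⟨n - 2, by omega⟩
    linarith [add_three_le_lucasK hk j]
  have hM : 0 < 9 * lucasK k m * lucasK k l := by
    have := lucasK_pos (by omega : 1 ≤ k)
    exact Nat.mul_pos (Nat.mul_pos (by norm_num) (this m)) (this l)
  have hN : a * 10 ^ d = lucasK k n * (9 * lucasK k m * lucasK k l) + a := by
    rw [mul_ten_pow_eq_nine_mul_repdigit_add, ← heq]; ring
  have hαk := two_mul_lt_succ_mul hα₁
  have hα : α ^ (k + 1) - 2 * α ^ k + 1 = 0 := by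
    linear_combination (α - 1) * hroot + geom_sum_mul α k
  have hrel : ((a * 10 ^ d : ℕ) : ℝ) * ((k + 1) * α - 2 * k) =
      ((9 * lucasK k m * lucasK k l : ℕ) : ℝ) * (α ^ (n - 1) * ((α - 1) * (2 * α - 1))) := by
    have hpow : α ^ ((n : ℤ) - 1) = α ^ (n - 1) := by
      rw [← zpow_natCast, Nat.cast_sub (by omega), Nat.cast_one]
    have hden : 2 + ((k : ℝ) + 1) * (α - 2) ≠ 0 := by linarith
    rw [hpow] at h
    field_simp at h
    push_cast
    linear_combination h
  have hbound := le_mul_of_root_relation hk hα hαk hrel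
  rw [hN] at hbound
  push_cast at hbound
  have hLn' : (27 : ℝ) ≤ lucasK k n := by exact_mod_cast hLn
  have hM' : (0 : ℝ) < 9 * lucasK k m * lucasK k l := by exact_mod_cast hM
  nlinarith

theorem Lambda3_nonzero
    (k n m l d a : ℕ) (hk : 2 ≤ k) (hnm : m ≤ n) (hml : l ≤ m)
    (hd : 2 ≤ d) (ha1 : 1 ≤ a) (ha9 : a ≤ 9)
    (heq : lucasK k n * lucasK k m * lucasK k l = a * ((10 ^ d - 1) / 9))
    (hn : 25 < n)
    (α : ℝ) (hroot : α ^ k = ∑ i ∈ Finset.range k, α ^ i)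
    (hα₁ : 2 * (1 - (2 : ℝ) ^ (-(k : ℤ))) < α) (hα₂ : α < 2) :
    ((a : ℝ) / 9) * 10 ^ d ≠
      ((α - 1) / (2 + ((k : ℝ) + 1) * (α - 2))) * (2 * α - 1) *
        α ^ ((n : ℤ) - 1) * (lucasK k m : ℝ) * (lucasK k l : ℝ) :=
  Lambda3_nonzero_general k n m l d a hk heq hn α hroot hα₁
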